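/- For any B-terms e1 and e2, there exists k ≥ 0 such that e1 ∘ (B e2) is βη-equivalent to (B (e1 e2)) ∘ B^k, where B^k denotes the k-fold composition B ∘ B ∘ … ∘ B (with B^0 the identity). -/

import Mathlib

/-- Untyped lambda terms in de Bruijn representation. -/
inductive Lam where
  | var : Nat → Lam
  | app : Lam → Lam → Lam
  | lam : Lam → Lam
deriving DecidableEq

namespace Lam

/-- Lift (shift by one) all free variables with index ≥ `c`. -/
def lift (c : Nat) : Lam → Lam
  | var n => if n < c then var n else var (n + 1)
  | app a b => app (lift c a) (lift c b)
  | lam a => lam (lift (c + 1) a)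

/-- Substitute `s` for the free variable with index `d`. -/
def subst (d : Nat) (s : Lam) : Lam → Lam
  | var n => if n = d then s else if d < n then var (n - 1) else var n
  | app a b => app (subst d s a) (subst d s b)
  | lam a => lam (subst (d + 1) (lift 0 s) a)

/-- One-step βη-reduction (compatible closure of β and η). -/
inductive Step : Lam → Lam → Prop
  | beta (a b : Lam) : Step (app (lam a) b) (subst 0 b a)
  | eta (a : Lam) : Step (lam (app (lift 0 a) (var 0))) a
  | appL {a a' : Lam} (b : Lam) : Step a a' → Step (app a b) (app a' b)
  | appR (a : Lam) {b b' : Lam} : Step b b' → Step (app a b) (app a b')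
  | xi {a a' : Lam} : Step a a' → Step (lam a) (lam a')

/-- βη-equivalence: the equivalence relation generated by one-step βη-reduction. -/
def BetaEtaEq (a b : Lam) : Prop := Relation.EqvGen Step a b

/-- The B combinator λf.λg.λx. f (g x). -/
def B : Lam := lam (lam (lam (app (var 2) (app (var 1) (var 0)))))

/-- `flat X n` is the (n+1)-fold flat left application, i.e. `X_(n+1)`:
`flat X 0 = X = X_(1)` and `flat X (n+1) = (flat X n) X = X_(n+2)`. -/
def flat (X : Lam) : Nat → Lam
  | 0 => X
  | n + 1 => app (flat X n) X

end Lam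

open Lam

/-- B-terms: applicative combinations of the single combinator B. -/
inductive IsBTerm : Lam → Prop
  | base : IsBTerm B
  | app {a b : Lam} : IsBTerm a → IsBTerm b → IsBTerm (app a b)

/-- Composition e1 ∘ e2 = B e1 e2. -/
def comp (a b : Lam) : Lam := app (app B a) b

/-- k-fold composition B ∘ B ∘ … ∘ B, with `cpow 0` the identity λx.x. -/
def cpow : ℕ → Lam
  | 0 => lam (var 0)
  | 1 => B
  | k + 2 => comp B (cpow (k + 1))

/-!
Call a term a *composition form* if it is built from `B`, `B a` and `a ∘ b`. Composition forms
are closed under application up to βη, because `(a ∘ b) g ≈ a (b g)`; hence every B-term is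
βη-equal to one. For composition forms `e₁` the claim follows by induction:
`B ∘ B x ≈ B (B x) ∘ B` gives `k = 1`, the functor law `B a ∘ B x ≈ B (a ∘ x)` gives `k = 0`,
and for `e₁ = a ∘ b` the exponents of `a` and `b` add up, by associativity of `∘`.
-/

theorem Relation.EqvGen.map {α β : Type*} {r : α → α → Prop} {s : β → β → Prop} {f : α → β}
    (hf : ∀ a b, r a b → s (f a) (f b)) {a b : α} (h : EqvGen r a b) :
    EqvGen s (f a) (f b) := by
  induction h with
  | rel x y hxy => exact .rel _ _ (hf x y hxy)
  | refl x => exact .refl _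
  | symm x y _ ih => exact .symm _ _ ih
  | trans x y z _ _ ihxy ihyz => exact .trans _ _ _ ihxy ihyz

infix:50 " =βη " => BetaEtaEq

namespace Lam

theorem lift_lift_of_le (e : Lam) {c c' : ℕ} (h : c ≤ c') :
    lift c (lift c' e) = lift (c' + 1) (lift c e) := by
  induction e generalizing c c' with
  | var n =>
    simp only [lift]
    split_ifs <;> simp only [lift] <;> split_ifs <;> first | rfl | omega
  | app a b iha ihb => simp [lift, iha h, ihb h]
  | lam a ih => simp [lift, ih (Nat.succ_le_succ h)]

@[simp]
theorem subst_lift (e : Lam) (d : ℕ) (s : Lam) : subst d s (lift d e) = e := by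
  induction e generalizing d s with
  | var n =>
    simp only [lift]
    split_ifs <;> simp only [subst] <;> split_ifs <;> first | rfl | omega
  | app a b iha ihb => simp [lift, subst, iha, ihb]
  | lam a ih => simp [lift, subst, ih]

@[simp]
theorem lift_B (c : ℕ) : lift c B = B := by simp [B, lift]

namespace BetaEtaEq

@[refl]
theorem refl (a : Lam) : a =βη a := Relation.EqvGen.refl a

theorem symm {a b : Lam} (h : a =βη b) : b =βη a := Relation.EqvGen.symm _ _ h

theorem trans {a b c : Lam} (h₁ : a =βη b) (h₂ : b =βη c) : a =βη c :=
  Relation.EqvGen.trans _ _ _ h₁ h₂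

instance : Trans BetaEtaEq BetaEtaEq BetaEtaEq := ⟨trans⟩

theorem of_step {a b : Lam} (h : Step a b) : a =βη b := Relation.EqvGen.rel _ _ h

theorem app_left {a a' : Lam} (b : Lam) (h : a =βη a') :
    app a b =βη app a' b :=
  Relation.EqvGen.map (f := (app · b)) (fun _ _ => Step.appL b) h

theorem app_right (a : Lam) {b b' : Lam} (h : b =βη b') :
    app a b =βη app a b' :=
  Relation.EqvGen.map (f := app a) (fun _ _ => Step.appR a) h

theorem app {a a' b b' : Lam} (ha : a =βη a') (hb : b =βη b') :
    app a b =βη app a' b' :=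
  (ha.app_left b).trans (hb.app_right a')

theorem lam {a a' : Lam} (h : a =βη a') : lam a =βη lam a' :=
  Relation.EqvGen.map (f := Lam.lam) (fun _ _ => Step.xi) h

theorem comp {a a' b b' : Lam} (ha : a =βη a') (hb : b =βη b') :
    comp a b =βη comp a' b' :=
  (ha.app_right B).app hb

theorem ext {a b : Lam} (h : .app (lift 0 a) (var 0) =βη .app (lift 0 b) (var 0)) :
    a =βη b :=
  calc a
    _ =βη _ := (of_step (Step.eta a)).symm
    _ =βη _ := h.lam
    _ =βη b := of_step (Step.eta b)

end BetaEtaEq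

theorem B_app_app_app (a b c : Lam) :
    app (app (app B a) b) c =βη app a (app b c) := by
  have hBa : Step (app B a) (lam (lam (app (lift 0 (lift 0 a)) (app (var 1) (var 0))))) := by
    simpa [subst, B] using Step.beta (lam (lam (app (var 2) (app (var 1) (var 0))))) a
  have hBab : Step (app (lam (lam (app (lift 0 (lift 0 a)) (app (var 1) (var 0))))) b)
      (lam (app (lift 0 a) (app (lift 0 b) (var 0)))) := by
    rw [lift_lift_of_le a le_rfl]
    simpa [subst] using Step.beta (lam (app (lift 1 (lift 0 a)) (app (var 1) (var 0)))) b
  have hBabc : Step (app (lam (app (lift 0 a) (app (lift 0 b) (var 0)))) c) (app a (app b c)) := by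
    simpa [subst] using Step.beta (app (lift 0 a) (app (lift 0 b) (var 0))) c
  exact (((BetaEtaEq.of_step hBa).app_left b).trans (.of_step hBab)).app_left c
    |>.trans (.of_step hBabc)

@[simp]
theorem lift_comp (c : ℕ) (a b : Lam) : lift c (comp a b) = comp (lift c a) (lift c b) := by
  simp [comp, lift, B]

@[simp]
theorem lift_cpow_zero (c : ℕ) : lift c (cpow 0) = cpow 0 := by simp [cpow, lift]

theorem cpow_zero_app (a : Lam) : app (cpow 0) a =βη a :=
  .of_step (by simpa [cpow, subst] using Step.beta (var 0) a)

theorem comp_assoc (a b c : Lam) : comp (comp a b) c =βη comp a (comp b c) := by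
  refine .ext ?_
  simp only [lift_comp]
  exact (B_app_app_app _ _ _).trans <| (B_app_app_app _ _ _).trans <|
    ((B_app_app_app _ _ _).trans ((B_app_app_app _ _ _).app_right _)).symm

theorem comp_cpow_zero (a : Lam) : comp a (cpow 0) =βη a := by
  refine .ext ?_
  simp only [lift_comp, lift_cpow_zero]
  exact (B_app_app_app _ _ _).trans ((cpow_zero_app _).app_right _)

theorem cpow_zero_comp (a : Lam) : comp (cpow 0) a =βη a := by
  refine .ext ?_
  simp only [lift_comp, lift_cpow_zero]
  exact (B_app_app_app _ _ _).trans (cpow_zero_app _)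

theorem app_B_comp_app_B (a b : Lam) :
    comp (app B a) (app B b) =βη app B (comp a b) := by
  refine .ext ?_
  simp only [lift_comp, lift, lift_B]
  exact (B_app_app_app _ _ _).trans (comp_assoc _ _ _).symm

theorem B_comp_app_B (a : Lam) :
    comp B (app B a) =βη comp (app B (app B a)) B := by
  refine .ext ?_
  simp only [lift_comp, lift, lift_B]
  exact (B_app_app_app _ _ _).trans <|
    (app_B_comp_app_B _ _).symm.trans (B_app_app_app _ _ _).symm

theorem cpow_succ (k : ℕ) : cpow (k + 1) =βη comp B (cpow k) := by
  cases k with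
  | zero => exact (comp_cpow_zero B).symm
  | succ k => rfl

theorem cpow_comp_cpow (m k : ℕ) : comp (cpow m) (cpow k) =βη cpow (m + k) := by
  induction m with
  | zero => simpa using cpow_zero_comp (cpow k)
  | succ m ih =>
    calc comp (cpow (m + 1)) (cpow k)
      _ =βη _ := (cpow_succ m).comp (.refl _)
      _ =βη _ := comp_assoc B (cpow m) (cpow k)
      _ =βη _ := (BetaEtaEq.refl B).comp ih
      _ =βη cpow (m + 1 + k) := by rw [Nat.add_right_comm]; exact (cpow_succ _).symm

end Lam

open Lam

inductive IsCompForm : Lam → Prop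
  | base : IsCompForm B
  | app_B {a : Lam} : IsCompForm a → IsCompForm (app B a)
  | compose {a b : Lam} : IsCompForm a → IsCompForm b → IsCompForm (comp a b)

namespace IsCompForm

theorem exists_app {a g : Lam} (ha : IsCompForm a) (hg : IsCompForm g) :
    ∃ r, IsCompForm r ∧ app a g =βη r := by
  induction ha generalizing g with
  | base => exact ⟨app B g, app_B hg, .refl _⟩
  | app_B ha => exact ⟨comp _ g, compose ha hg, .refl _⟩
  | compose _ _ iha ihb =>
    obtain ⟨r, hr, hbg⟩ := ihb hg
    obtain ⟨s, hs, har⟩ := iha hr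
    exact ⟨s, hs, (B_app_app_app _ _ _).trans ((hbg.app_right _).trans har)⟩

theorem exists_comp_app_B_betaEtaEq {e₁ : Lam} (h : IsCompForm e₁) (e₂ : Lam) :
    ∃ k : ℕ, comp e₁ (app B e₂) =βη comp (app B (app e₁ e₂)) (cpow k) := by
  induction h generalizing e₂ with
  | base => exact ⟨1, B_comp_app_B e₂⟩
  | app_B _ => exact ⟨0, (app_B_comp_app_B _ e₂).trans (comp_cpow_zero _).symm⟩
  | @compose a b _ _ iha ihb =>
    obtain ⟨k, hk⟩ := ihb e₂
    obtain ⟨m, hm⟩ := iha (app b e₂)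
    refine ⟨m + k, ?_⟩
    calc comp (comp a b) (app B e₂)
      _ =βη _ := comp_assoc a b (app B e₂)
      _ =βη _ := (BetaEtaEq.refl a).comp hk
      _ =βη _ := (comp_assoc a _ _).symm
      _ =βη _ := hm.comp (.refl _)
      _ =βη _ := comp_assoc _ _ _
      _ =βη _ := (BetaEtaEq.refl _).comp (cpow_comp_cpow m k)
      _ =βη _ := ((B_app_app_app a b e₂).symm.app_right B).comp (.refl _)

end IsCompForm

theorem IsBTerm.exists_isCompForm {e : Lam} (he : IsBTerm e) :
    ∃ e', IsCompForm e' ∧ e =βη e' := by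
  induction he with
  | base => exact ⟨B, .base, .refl _⟩
  | app _ _ iha ihb =>
    obtain ⟨a', ha', ha⟩ := iha
    obtain ⟨b', hb', hb⟩ := ihb
    obtain ⟨r, hr, hab⟩ := ha'.exists_app hb'
    exact ⟨r, hr, (ha.app hb).trans hab⟩

theorem stmt19_general (e1 e2 : Lam) (h1 : IsBTerm e1) :
    ∃ k : ℕ, BetaEtaEq (comp e1 (app B e2)) (comp (app B (app e1 e2)) (cpow k)) := by
  obtain ⟨e1', h1', he1⟩ := h1.exists_isCompForm
  obtain ⟨k, hk⟩ := h1'.exists_comp_app_B_betaEtaEq e2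
  refine ⟨k, ?_⟩
  calc comp e1 (app B e2)
    _ =βη _ := he1.comp (.refl _)
    _ =βη _ := hk
    _ =βη _ := ((he1.symm.app_left e2).app_right B).comp (.refl _)

/-- For any B-terms e1 and e2, there exists k ≥ 0 such that
e1 ∘ (B e2) is βη-equivalent to (B (e1 e2)) ∘ B^k. -/
theorem stmt19 (e1 e2 : Lam) (h1 : IsBTerm e1) (h2 : IsBTerm e2) :
    ∃ k : ℕ, BetaEtaEq (comp e1 (app B e2)) (comp (app B (app e1 e2)) (cpow k)) :=
  stmt19_general e1 e2 h1
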